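/- Let k be an algebraically closed field of characteristic 0 and S = k[x,y]/(y² − x³) the coordinate ring of the cuspidal cubic. Let x̄, ȳ denote the images of x, y in S. Then the S-linear map φ : S → S² given by φ(1) = (−3x̄², 2ȳ) is injective, and its cokernel is isomorphic as an S-module to the module of Kähler differentials Ω^(1)(S/k) (via sending the standard basis of S² to δ^(1)(x̄) and δ^(1)(ȳ)); consequently 0 → S → S² → Ω^(1)(S/k) → 0 is a free resolution and the projective dimension of Ω^(1)(S/k) is at most 1. -/

import Mathlib

open TensorProduct

/-- `hasProjDimLE R n M` says that the `R`-module `M` admits a projective resolution of length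
at most `n`; i.e. the projective dimension of `M` is at most `n`. -/
def hasProjDimLE (R : Type u) [CommRing R] :
    ℕ → ∀ (M : Type v) [AddCommGroup M] [Module R M], Prop
  | 0 => fun M _ _ => Module.Projective R M
  | (n + 1) => fun M _ _ =>
      ∃ (P : Type v) (_ : AddCommGroup P) (_ : Module R P) (f : P →ₗ[R] M),
        Module.Projective R P ∧ Function.Surjective f ∧
          hasProjDimLE R n (LinearMap.ker f)

/-- The coordinate ring `S = k[x,y]/(y² − x³)` of the cuspidal cubic, with `x = X 0`,
`y = X 1`. -/
noncomputable abbrev CuspRing (k : Type*) [CommRing k] :=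
  MvPolynomial (Fin 2) k ⧸
    (Ideal.span {(MvPolynomial.X 1 : MvPolynomial (Fin 2) k) ^ 2 - MvPolynomial.X 0 ^ 3})

/-- The image `x̄` of `x` in `S = k[x,y]/(y² − x³)`. -/
noncomputable def cuspX (k : Type*) [CommRing k] : CuspRing k :=
  Ideal.Quotient.mk _ (MvPolynomial.X 0)

/-- The image `ȳ` of `y` in `S = k[x,y]/(y² − x³)`. -/
noncomputable def cuspY (k : Type*) [CommRing k] : CuspRing k :=
  Ideal.Quotient.mk _ (MvPolynomial.X 1)

open MvPolynomial

section Prime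
variable (k : Type*) [Field k]

lemma cusp_no_cbrt (b : RatFunc k) :
    b ^ 3 ≠ algebraMap (Polynomial k) (RatFunc k) (Polynomial.X ^ 2) := by
  intro h
  have hX2 : (Polynomial.X ^ 2 : Polynomial k) ≠ 0 := pow_ne_zero _ Polynomial.X_ne_zero
  have hb : b ≠ 0 := by
    rintro rfl
    rw [zero_pow (by norm_num), eq_comm] at h
    exact hX2 ((map_eq_zero_iff _ (IsFractionRing.injective _ _)).mp h)
  have h1 : (b ^ 3).intDegree = 3 * b.intDegree := by
    have : b ^ 3 = b * (b * b) := by ring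
    rw [this, RatFunc.intDegree_mul hb (mul_ne_zero hb hb), RatFunc.intDegree_mul hb hb]
    ring
  have h2 : (b ^ 3).intDegree = 2 := by
    rw [h, RatFunc.intDegree_polynomial]
    simp [Polynomial.natDegree_X_pow]
  omega

lemma cusp_poly_prime :
    Prime ((X 1 : MvPolynomial (Fin 2) k) ^ 2 - X 0 ^ 3) := by
  classical
  let e2 : MvPolynomial (Fin 1) k ≃ₐ[k] Polynomial k :=
    (finSuccEquiv k 0).trans (Polynomial.mapAlgEquiv (isEmptyAlgEquiv k (Fin 0)))
  let E : MvPolynomial (Fin 2) k ≃ₐ[k] Polynomial (Polynomial k) :=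
    (finSuccEquiv k 1).trans (Polynomial.mapAlgEquiv e2)
  have h0 : E (X 0) = Polynomial.X := by
    simp [E, finSuccEquiv_X_zero]
  have h1 : E (X 1) = Polynomial.C Polynomial.X := by
    have h10 : (1 : Fin 2) = Fin.succ 0 := rfl
    rw [show E (X 1) = Polynomial.mapAlgEquiv e2 (finSuccEquiv k 1 (X 1)) from rfl, h10,
      finSuccEquiv_X_succ]
    simp [e2, finSuccEquiv_X_zero]
  have hE : E ((X 1 : MvPolynomial (Fin 2) k) ^ 2 - X 0 ^ 3)
      = Polynomial.C (Polynomial.X ^ 2) - Polynomial.X ^ 3 := by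
    rw [map_sub, map_pow, map_pow, h0, h1, ← Polynomial.C_pow]
  have hmon : (Polynomial.X ^ 3 - Polynomial.C (Polynomial.X ^ 2 : Polynomial k)).Monic :=
    Polynomial.monic_X_pow_sub_C _ (by norm_num)
  have hirr : Irreducible (Polynomial.X ^ 3 - Polynomial.C (Polynomial.X ^ 2 : Polynomial k)) := by
    rw [hmon.irreducible_iff_irreducible_map_fraction_map (K := RatFunc k)]
    rw [Polynomial.map_sub, Polynomial.map_pow, Polynomial.map_X, Polynomial.map_C]
    exact X_pow_sub_C_irreducible_of_prime Nat.prime_three (fun b => cusp_no_cbrt k b)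
  have hassoc : Associated (Polynomial.X ^ 3 - Polynomial.C (Polynomial.X ^ 2 : Polynomial k))
      (Polynomial.C (Polynomial.X ^ 2) - Polynomial.X ^ 3) := ⟨-1, by simp⟩
  have hEprime : Prime (E ((X 1 : MvPolynomial (Fin 2) k) ^ 2 - X 0 ^ 3)) := by
    rw [hE]
    exact UniqueFactorizationMonoid.irreducible_iff_prime.mp (hassoc.irreducible hirr)
  exact (MulEquiv.prime_iff (E : MvPolynomial (Fin 2) k ≃* Polynomial (Polynomial k))).mp hEprime

lemma cusp_ideal_prime :
    (Ideal.span {(X 1 : MvPolynomial (Fin 2) k) ^ 2 - X 0 ^ 3}).IsPrime :=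
  (Ideal.span_singleton_prime (cusp_poly_prime k).ne_zero).mpr (cusp_poly_prime k)

end Prime

section Pres


variable (k : Type*) [Field k]

/-- The ideal of the cusp. -/
noncomputable abbrev cuspIdeal : Ideal (MvPolynomial (Fin 2) k) :=
  Ideal.span {(MvPolynomial.X 1 : MvPolynomial (Fin 2) k) ^ 2 - MvPolynomial.X 0 ^ 3}

lemma cusp_aeval_eq :
    (MvPolynomial.aeval (fun i : Fin 2 => (Ideal.Quotient.mk (cuspIdeal k) (MvPolynomial.X i))) :
      MvPolynomial (Fin 2) k →ₐ[k] CuspRing k) = Ideal.Quotient.mkₐ k (cuspIdeal k) := by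
  ext i
  simp

lemma cusp_aeval_surjective :
    Function.Surjective (MvPolynomial.aeval
      (fun i : Fin 2 => (Ideal.Quotient.mk (cuspIdeal k) (MvPolynomial.X i))) :
      MvPolynomial (Fin 2) k →ₐ[k] CuspRing k) := by
  rw [cusp_aeval_eq]
  exact Ideal.Quotient.mk_surjective

/-- The obvious presentation of the cusp ring. -/
noncomputable def cuspPres : Algebra.Presentation k (CuspRing k) (Fin 2) Unit where
  __ := Algebra.Generators.ofSurjective
    (fun i : Fin 2 => Ideal.Quotient.mk (cuspIdeal k) (MvPolynomial.X i))
    (cusp_aeval_surjective k)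
  relation _ := (X 1 : MvPolynomial (Fin 2) k) ^ 2 - X 0 ^ 3
  span_range_relation_eq_ker := by
    rw [Algebra.Generators.ker_eq_ker_aeval_val]
    have : Set.range (fun _ : Unit => (X 1 : MvPolynomial (Fin 2) k) ^ 2 - X 0 ^ 3)
        = {(X 1 : MvPolynomial (Fin 2) k) ^ 2 - X 0 ^ 3} := Set.range_const
    rw [this]
    show cuspIdeal k = RingHom.ker (MvPolynomial.aeval
      (fun i : Fin 2 => Ideal.Quotient.mk (cuspIdeal k) (MvPolynomial.X i)))
    have h2 : (MvPolynomial.aeval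
        (fun i : Fin 2 => (Ideal.Quotient.mk (cuspIdeal k) (MvPolynomial.X i))) :
        MvPolynomial (Fin 2) k →ₐ[k] CuspRing k).toRingHom
        = Ideal.Quotient.mk (cuspIdeal k) := by
      rw [cusp_aeval_eq]; rfl
    show cuspIdeal k = RingHom.ker (MvPolynomial.aeval
      (fun i : Fin 2 => Ideal.Quotient.mk (cuspIdeal k) (MvPolynomial.X i)) :
      MvPolynomial (Fin 2) k →ₐ[k] CuspRing k).toRingHom
    rw [h2, Ideal.mk_ker]

lemma cusp_pderiv_zero :
    MvPolynomial.pderiv (0 : Fin 2) ((X 1 : MvPolynomial (Fin 2) k) ^ 2 - X 0 ^ 3)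
      = -(3 * X 0 ^ 2) := by
  simp [MvPolynomial.pderiv_X_self, MvPolynomial.pderiv_X_of_ne, Derivation.leibniz_pow]

lemma cusp_pderiv_one :
    MvPolynomial.pderiv (1 : Fin 2) ((X 1 : MvPolynomial (Fin 2) k) ^ 2 - X 0 ^ 3)
      = 2 * X 1 := by
  simp [MvPolynomial.pderiv_X_self, MvPolynomial.pderiv_X_of_ne, Derivation.leibniz_pow]

set_option synthInstance.maxHeartbeats 400000 in
set_option maxHeartbeats 1600000 in
lemma cusp_relation_apply (i : Fin 2) :
    ((cuspPres k).differentialsRelations.relation ()) i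
      = ![-3 * cuspX k ^ 2, 2 * cuspY k] i := by
  have halg : ⇑(algebraMap (cuspPres k).Ring (CuspRing k))
      = ⇑(Ideal.Quotient.mk (cuspIdeal k)) := by
    rw [Algebra.Generators.algebraMap_eq]
    show ⇑(MvPolynomial.aeval fun i : Fin 2 =>
      Ideal.Quotient.mk (cuspIdeal k) (MvPolynomial.X i)) = _
    rw [cusp_aeval_eq]; rfl
  have step : ((cuspPres k).differentialsRelations.relation ()) i
      = algebraMap (cuspPres k).Ring (CuspRing k)
          (((KaehlerDifferential.mvPolynomialBasis k (Fin 2)).repr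
            ((KaehlerDifferential.D k (MvPolynomial (Fin 2) k))
              ((X 1 : MvPolynomial (Fin 2) k) ^ 2 - X 0 ^ 3))) i) := rfl
  rw [step, KaehlerDifferential.mvPolynomialBasis_repr_apply, halg]
  fin_cases i
  · show Ideal.Quotient.mk (cuspIdeal k)
        (pderiv (0 : Fin 2) ((X 1 : MvPolynomial (Fin 2) k) ^ 2 - X 0 ^ 3)) = -3 * cuspX k ^ 2
    rw [cusp_pderiv_zero, cuspX, map_neg, map_mul, map_pow, map_ofNat]
    ring
  · show Ideal.Quotient.mk (cuspIdeal k)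
        (pderiv (1 : Fin 2) ((X 1 : MvPolynomial (Fin 2) k) ^ 2 - X 0 ^ 3)) = 2 * cuspY k
    rw [cusp_pderiv_one, cuspY, map_mul, map_ofNat]

end Pres


set_option synthInstance.maxHeartbeats 400000 in
set_option maxHeartbeats 1600000 in
/-- Let `k` be an algebraically closed field of characteristic `0` and
`S = k[x,y]/(y² − x³)`. The `S`-linear map `φ : S → S²` with `φ(1) = (−3x̄², 2ȳ)` is
injective, and its cokernel is isomorphic to `Ω^(1)(S/k)` via an isomorphism sending the
classes of the standard basis vectors of `S²` to `δ^(1)(x̄)` and `δ^(1)(ȳ)`; consequently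
`0 → S → S² → Ω^(1)(S/k) → 0` is a free resolution and the projective dimension of
`Ω^(1)(S/k)` is at most `1`. -/
theorem cusp_kaehler_resolution (k : Type*) [Field k] [IsAlgClosed k] [CharZero k]
    (φ : CuspRing k →ₗ[CuspRing k] (Fin 2 → CuspRing k))
    (hφ : φ 1 = ![-3 * cuspX k ^ 2, 2 * cuspY k]) :
    Function.Injective φ ∧
    (∃ e : ((Fin 2 → CuspRing k) ⧸ LinearMap.range φ) ≃ₗ[CuspRing k] Ω[CuspRing k⁄k],
      e (Submodule.Quotient.mk (Pi.single 0 1)) = KaehlerDifferential.D k (CuspRing k) (cuspX k) ∧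
      e (Submodule.Quotient.mk (Pi.single 1 1)) =
        KaehlerDifferential.D k (CuspRing k) (cuspY k)) ∧
    hasProjDimLE (CuspRing k) 1 (Ω[CuspRing k⁄k]) := by
  classical
  haveI : (cuspIdeal k).IsPrime := cusp_ideal_prime k
  haveI : IsDomain (CuspRing k) := Ideal.Quotient.isDomain _
  haveI : CharZero (CuspRing k) :=
    charZero_of_injective_algebraMap (algebraMap k (CuspRing k)).injective
  -- the distinguished vector
  set v : Fin 2 → CuspRing k := ![-3 * cuspX k ^ 2, 2 * cuspY k] with hv
  have hX : cuspX k ≠ 0 := by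
    rw [cuspX, Ne, Ideal.Quotient.eq_zero_iff_mem, Ideal.mem_span_singleton]
    rintro ⟨c, hc⟩
    have := congrArg (MvPolynomial.eval (fun _ : Fin 2 => (1 : k))) hc
    simp at this
  have h3 : (-3 : CuspRing k) ≠ 0 := by
    have : ((3 : ℕ) : CuspRing k) ≠ 0 := Nat.cast_ne_zero.mpr (by norm_num)
    rw [Nat.cast_ofNat] at this
    exact neg_ne_zero.mpr this
  have hv0 : v 0 ≠ 0 := by
    show -3 * cuspX k ^ 2 ≠ 0
    exact mul_ne_zero h3 (pow_ne_zero _ hX)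
  -- injectivity
  have hsmul : ∀ s : CuspRing k, φ s = s • v := by
    intro s
    rw [← hφ, ← map_smul, smul_eq_mul, mul_one]
  have hinj : Function.Injective φ := by
    intro a b hab
    have hab' : a • v = b • v := by rw [← hsmul a, ← hsmul b]; exact hab
    have h0 : a * v 0 = b * v 0 := by simpa [smul_eq_mul] using congrFun hab' 0
    exact mul_right_cancel₀ hv0 h0
  -- the range of φ
  have hrange : LinearMap.range φ = Submodule.span (CuspRing k) {v} := by
    apply le_antisymm
    · rintro _ ⟨s, rfl⟩
      rw [hsmul s]
      exact Submodule.smul_mem _ _ (Submodule.mem_span_singleton_self _)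
    · rw [Submodule.span_singleton_le_iff_mem]
      exact ⟨1, hφ⟩
  -- the presentation of the differentials
  have hpres := (cuspPres k).differentialsSolution_isPresentation
  set eLE : (Fin 2 → CuspRing k) ≃ₗ[CuspRing k] ((cuspPres k).differentialsRelations.G →₀ CuspRing k) :=
    (Finsupp.linearEquivFunOnFinite (CuspRing k) (CuspRing k) (Fin 2)).symm with heLE
  have hvrel : eLE v = (cuspPres k).differentialsRelations.relation () := by
    ext i
    have hcoe : (eLE v) i = v i := rfl
    exact hcoe.trans (by rw [hv]; exact (cusp_relation_apply k i).symm)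
  have hmap : Submodule.map (eLE : (Fin 2 → CuspRing k) →ₗ[CuspRing k] _) (LinearMap.range φ)
      = Submodule.span (CuspRing k)
          (Set.range (cuspPres k).differentialsRelations.relation) := by
    rw [hrange, Submodule.map_span, Set.image_singleton, LinearEquiv.coe_coe, hvrel]
    congr 1
    exact (Set.range_unique).symm
  set e : ((Fin 2 → CuspRing k) ⧸ LinearMap.range φ) ≃ₗ[CuspRing k] Ω[CuspRing k⁄k] :=
    (Submodule.Quotient.equiv (LinearMap.range φ) _ eLE hmap).trans hpres.linearEquiv with he
  have happly : ∀ w : Fin 2 → CuspRing k,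
      e (Submodule.Quotient.mk w) = (cuspPres k).differentialsSolution.π (eLE w) := by
    intro w
    rw [he]
    show hpres.linearEquiv ((Submodule.Quotient.equiv _ _ eLE hmap) (Submodule.Quotient.mk w)) = _
    rw [Submodule.Quotient.equiv_apply]
    show hpres.linearEquiv
      ((cuspPres k).differentialsRelations.toQuotient (eLE w)) = _
    rw [hpres.linearEquiv_apply, Module.Relations.Solution.fromQuotient_toQuotient]
  have hgen0 : e (Submodule.Quotient.mk (Pi.single 0 1))
      = KaehlerDifferential.D k (CuspRing k) (cuspX k) := by
    rw [happly]
    have : eLE (Pi.single 0 1) = Finsupp.single (0 : Fin 2) (1 : CuspRing k) :=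
      Finsupp.linearEquivFunOnFinite_symm_single (CuspRing k) (CuspRing k) (Fin 2) 0 1
    rw [this]
    exact (Module.Relations.Solution.π_single (cuspPres k).differentialsSolution (0 : Fin 2)).trans rfl
  have hgen1 : e (Submodule.Quotient.mk (Pi.single 1 1))
      = KaehlerDifferential.D k (CuspRing k) (cuspY k) := by
    rw [happly]
    have : eLE (Pi.single 1 1) = Finsupp.single (1 : Fin 2) (1 : CuspRing k) :=
      Finsupp.linearEquivFunOnFinite_symm_single (CuspRing k) (CuspRing k) (Fin 2) 1 1
    rw [this]
    exact (Module.Relations.Solution.π_single (cuspPres k).differentialsSolution (1 : Fin 2)).trans rfl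
  refine ⟨hinj, ⟨e, hgen0, hgen1⟩, ?_⟩
  -- projective dimension
  set f : (Fin 2 → CuspRing k) →ₗ[CuspRing k] Ω[CuspRing k⁄k] :=
    e.toLinearMap ∘ₗ (LinearMap.range φ).mkQ with hf
  have hker : LinearMap.ker f = LinearMap.range φ := by
    rw [hf, LinearMap.ker_comp, LinearEquiv.ker, Submodule.comap_bot, Submodule.ker_mkQ]
  have hsurj : Function.Surjective f :=
    (EquivLike.surjective e).comp (Submodule.mkQ_surjective _)
  have hprojker : Module.Projective (CuspRing k) (LinearMap.ker f) :=
    Module.Projective.of_equiv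
      ((LinearEquiv.ofInjective φ hinj).trans (LinearEquiv.ofEq _ _ hker.symm))
  exact ⟨Fin 2 → CuspRing k, inferInstance, inferInstance, f, inferInstance, hsurj, hprojker⟩
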